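/- Let π : P → Q be a linear projection of polyhedra (Q = π(P)), P̃ ⊆ ℚ^n ⊕ ℚ the cone over P, and π̃(x,λ) = (π(x),λ). Then the fan induced by π̃(P̃) — i.e., the common refinement of the cones {π̃(F̃) : F a face of P̃} — is the cone over the subdivision of Q induced by π(P): each cell of the fan at height 1 is a cell of the common refinement of {π(E) : E a face of P}, and each cell at height 0 arises from faces of rec(P). -/
import Mathlib


open Finset Set Pointwise

noncomputable section

variable {ι : Type*}

/-- The standard pairing between `ι → ℚ` and itself (functionals as vectors). -/
def dotp [Fintype ι] (w x : ι → ℚ) : ℚ := ∑ i, w i * x i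

/-- The face of `P` on which the linear functional `w` attains its minimum. -/
def faceOf [Fintype ι] (P : Set (ι → ℚ)) (w : ι → ℚ) : Set (ι → ℚ) :=
  {x | x ∈ P ∧ ∀ y ∈ P, dotp w x ≤ dotp w y}

/-- `F` is a (nonempty) face of `P`. -/
def IsFaceOf [Fintype ι] (P F : Set (ι → ℚ)) : Prop :=
  F.Nonempty ∧ ∃ w, F = faceOf P w

/-- The (closed) inner normal cone of a face `F` of `P`: all functionals minimized on `F`. -/
def normalCone [Fintype ι] (P F : Set (ι → ℚ)) : Set (ι → ℚ) :=
  {w | F ⊆ faceOf P w}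

/-- The recession cone of `P`. -/
def recCone (P : Set (ι → ℚ)) : Set (ι → ℚ) := {u | ∀ x ∈ P, x + u ∈ P}

/-- The dual cone of `C`. -/
def dualCone [Fintype ι] (C : Set (ι → ℚ)) : Set (ι → ℚ) := {w | ∀ x ∈ C, 0 ≤ dotp w x}

/-- The relative interior of a convex set `S`. -/
def relint (S : Set (ι → ℚ)) : Set (ι → ℚ) :=
  {x | x ∈ S ∧ ∀ y ∈ S, ∃ ε : ℚ, 0 < ε ∧ x + ε • (x - y) ∈ S}

/-- `P` is a polyhedron `{x | A x ≥ b}`. -/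
def IsPolyhedron [Fintype ι] (P : Set (ι → ℚ)) : Prop :=
  ∃ (r : ℕ) (A : Fin r → ι → ℚ) (b : Fin r → ℚ), P = {x | ∀ i, b i ≤ dotp (A i) x}

/-- `C` is a polyhedral cone `{x | A x ≥ 0}`. -/
def IsPolyhedralCone [Fintype ι] (C : Set (ι → ℚ)) : Prop :=
  ∃ (r : ℕ) (A : Fin r → ι → ℚ), C = {x | ∀ i, 0 ≤ dotp (A i) x}

/-- Two polyhedra are normally equivalent: they have the same inner normal fan,
i.e. the same support and the same partition of functionals by faces. -/
def normallyEquiv [Fintype ι] (P P' : Set (ι → ℚ)) : Prop :=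
  (∀ w, (faceOf P w).Nonempty ↔ (faceOf P' w).Nonempty) ∧
  ∀ w w', faceOf P w = faceOf P w' ↔ faceOf P' w = faceOf P' w'

/-- `F` is the smallest face of `P` containing the set `S`. -/
def IsSmallestFaceContaining [Fintype ι] (P S F : Set (ι → ℚ)) : Prop :=
  IsFaceOf P F ∧ S ⊆ F ∧ ∀ G, IsFaceOf P G → S ⊆ G → F ⊆ G

/-- The homogenization `P̃` of `P`: the closure in `(ι ⊕ Unit) → ℚ` of the cone over `P`
placed at height `1`. -/
def tildeSet (P : Set (ι → ℚ)) : Set ((ι ⊕ Unit) → ℚ) :=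
  closure {p | ∃ x ∈ P, ∃ l : ℚ, 0 < l ∧ p = Sum.elim (l • x) (fun _ => l)}

/-- The lift `π̃` of the projection `π` onto the last `d` coordinates. -/
def projTilde (m d : ℕ) (p : ((Fin m ⊕ Fin d) ⊕ Unit) → ℚ) : (Fin d ⊕ Unit) → ℚ :=
  Sum.elim (fun i => p (Sum.inl (Sum.inr i))) (fun _ => p (Sum.inr ()))

/-- The minimal cell containing `z` of the fan induced by `π̃(P̃)`, i.e. the common
refinement of the cones `π̃(F̃)` for faces of `P̃`. -/
def tildeCell (m d : ℕ) (P : Set ((Fin m ⊕ Fin d) → ℚ)) (z : (Fin d ⊕ Unit) → ℚ) :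
    Set ((Fin d ⊕ Unit) → ℚ) :=
  ⋂₀ {S | ∃ F, IsFaceOf (tildeSet P) F ∧ S = projTilde m d '' F ∧ z ∈ S}

/-- The minimal cell containing `q` of the subdivision induced by the projections
of the faces of `R`. -/
def baseCell (m d : ℕ) (R : Set ((Fin m ⊕ Fin d) → ℚ)) (q : Fin d → ℚ) :
    Set (Fin d → ℚ) :=
  ⋂₀ {S | ∃ E, IsFaceOf R E ∧ S = (fun x : (Fin m ⊕ Fin d) → ℚ => x ∘ Sum.inr) '' E ∧ q ∈ S}

section FarkasDev
open Finset

lemma sum_dite_subtype {κ : Type*} [Fintype κ] (p : κ → Prop) [DecidablePred p]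
    (f : Subtype p → ℚ) :
    ∑ i : κ, (if h : p i then f ⟨i, h⟩ else 0) = ∑ s : Subtype p, f s := by
  calc ∑ i : κ, (if h : p i then f ⟨i, h⟩ else 0)
      = ∑ i ∈ Finset.univ.filter p, (if h : p i then f ⟨i, h⟩ else 0) := by
        rw [← Finset.sum_filter_add_sum_filter_not Finset.univ p
          (fun i => if h : p i then f ⟨i, h⟩ else 0)]
        have h1 : ∀ i ∈ Finset.univ.filter (fun i => ¬ p i),
            (if h : p i then f ⟨i, h⟩ else 0) = 0 := by
          intro i hi
          simp only [Finset.mem_filter] at hi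
          rw [dif_neg hi.2]
        rw [Finset.sum_eq_zero h1, add_zero]
    _ = ∑ s : Subtype p, (if h : p s.1 then f ⟨s.1, h⟩ else 0) :=
        Finset.sum_subtype _ (by simp) _
    _ = ∑ s : Subtype p, f s := by
        apply Finset.sum_congr rfl
        intro s _
        rw [dif_pos s.2]

theorem myFF : ∀ (n : ℕ) {κ : Type*} [Fintype κ] (A : κ → Fin n → ℚ) (b : κ → ℚ),
    (¬ ∃ x : Fin n → ℚ, ∀ i, b i ≤ ∑ j, A i j * x j) →
    ∃ y : κ → ℚ, (∀ i, 0 ≤ y i) ∧ (∀ j, ∑ i, y i * A i j = 0) ∧ 0 < ∑ i, y i * b i := by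
  intro n
  induction n with
  | zero =>
    intro κ _ A b hin
    have h0 : ∃ i, 0 < b i := by
      by_contra hc
      push_neg at hc
      exact hin ⟨fun j => 0, fun i => by simpa using hc i⟩
    obtain ⟨i0, hi0⟩ := h0
    classical
    refine ⟨fun k => if k = i0 then 1 else 0, fun i => by positivity, fun j => j.elim0, ?_⟩
    simp [ite_mul, hi0]
  | succ n IH =>
    intro κ _ A b hin
    classical
    set α : κ → ℚ := fun i => A i (Fin.last n) with hα
    set A' : κ → Fin n → ℚ := fun i j => A i j.castSucc with hA'
    set J := ({i : κ // α i = 0} ⊕ ({i : κ // 0 < α i} × {i : κ // α i < 0})) with hJ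
    set B : J → Fin n → ℚ := Sum.elim (fun i => A' i.1)
      (fun pq => fun j => (-α pq.2.1) * A' pq.1.1 j + (α pq.1.1) * A' pq.2.1 j) with hB
    set c : J → ℚ := Sum.elim (fun i => b i.1)
      (fun pq => (-α pq.2.1) * b pq.1.1 + (α pq.1.1) * b pq.2.1) with hc
    -- Step 1 : (B, c) is infeasible
    have hBin : ¬ ∃ x' : Fin n → ℚ, ∀ ρ, c ρ ≤ ∑ j, B ρ j * x' j := by
      rintro ⟨x', hx'⟩
      set d : κ → ℚ := fun i => ∑ j, A' i j * x' j with hd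
      have hz : ∀ i (h : α i = 0), b i ≤ d i := by
        intro i h
        have := hx' (Sum.inl ⟨i, h⟩)
        simpa [hB, hc, hd, mul_comm] using this
      have expand : ∀ (s u : ℚ) (i k : κ),
          ∑ j, (s * A' i j + u * A' k j) * x' j = s * d i + u * d k := by
        intro s u i k
        simp only [hd, add_mul, Finset.sum_add_distrib, Finset.mul_sum]
        congr 1 <;> (apply Finset.sum_congr rfl; intros; ring)
      have hcombo : ∀ i (hi : 0 < α i) (k : κ) (hk : α k < 0),
          (-α k) * b i + α i * b k ≤ (-α k) * d i + α i * d k := by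
        intro i hi k hk
        have h := hx' (Sum.inr (⟨i, hi⟩, ⟨k, hk⟩))
        simp only [hB, hc, Sum.elim_inr] at h
        rwa [expand] at h
      set L : κ → ℚ := fun i => (b i - d i) / α i with hL
      have key : ∀ i, 0 < α i → ∀ k, α k < 0 → L i ≤ L k := by
        intro i hi k hk
        have h1 := hcombo i hi k hk
        rw [hL, div_le_iff₀ hi]
        rw [show (b k - d k) / α k * α i = (b k - d k) * α i / α k by ring]
        rw [le_div_iff_of_neg hk]
        nlinarith [h1]
      set t : ℚ :=
        if hP : (Finset.univ.filter fun i => 0 < α i).Nonempty then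
          (Finset.univ.filter fun i => 0 < α i).sup' hP L
        else if hN : (Finset.univ.filter fun i => α i < 0).Nonempty then
          (Finset.univ.filter fun i => α i < 0).inf' hN L
        else 0 with ht
      apply hin
      refine ⟨Fin.snoc x' t, fun i => ?_⟩
      have hsum : ∑ j, A i j * (Fin.snoc x' t : Fin (n+1) → ℚ) j = d i + α i * t := by
        rw [Fin.sum_univ_castSucc]
        simp [hd, hA', hα]
      rw [hsum]
      rcases lt_trichotomy (α i) 0 with hneg | hzero | hpos
      · -- need t ≤ L i
        have hti : t ≤ L i := by
          by_cases hP : (Finset.univ.filter fun i => 0 < α i).Nonempty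
          · rw [ht, dif_pos hP]
            apply Finset.sup'_le
            intro k hk
            simp only [Finset.mem_filter] at hk
            exact key k hk.2 i hneg
          · rw [ht, dif_neg hP, dif_pos ⟨i, by simp [hneg]⟩]
            exact Finset.inf'_le _ (by simp [hneg])
        have := (le_div_iff_of_neg hneg).mp hti
        linarith
      · have := hz i hzero
        rw [hzero]
        linarith
      · have hti : L i ≤ t := by
          rw [ht, dif_pos ⟨i, by simp [hpos]⟩]
          exact Finset.le_sup' _ (by simp [hpos])
        have := (div_le_iff₀ hpos).mp hti
        linarith
    obtain ⟨y'', hy''nn, hy''A, hy''b⟩ := IH B c hBin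
    -- Step 2 : transfer the certificate
    set y : κ → ℚ := fun i =>
      (if h : α i = 0 then y'' (Sum.inl ⟨i, h⟩) else 0)
      + (if h : 0 < α i then ∑ k : {k : κ // α k < 0}, y'' (Sum.inr (⟨i, h⟩, k)) * (-α k.1) else 0)
      + (if h : α i < 0 then ∑ p : {p : κ // 0 < α p}, y'' (Sum.inr (p, ⟨i, h⟩)) * α p.1 else 0)
      with hy
    have hynn : ∀ i, 0 ≤ y i := by
      intro i
      refine add_nonneg (add_nonneg ?_ ?_) ?_
      · split
        · exact hy''nn _
        · exact le_rfl
      · split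
        · apply Finset.sum_nonneg
          intro k _
          exact mul_nonneg (hy''nn _) (by linarith [k.2])
        · exact le_rfl
      · split
        · apply Finset.sum_nonneg
          intro p _
          exact mul_nonneg (hy''nn _) (le_of_lt p.2)
        · exact le_rfl
    have master : ∀ v : κ → ℚ,
        ∑ i, y i * v i = ∑ ρ : J, y'' ρ *
          (Sum.elim (fun i => v i.1) (fun pq => (-α pq.2.1) * v pq.1.1 + (α pq.1.1) * v pq.2.1) ρ) := by
      intro v
      have t1 : ∑ i, (if h : α i = 0 then y'' (Sum.inl ⟨i, h⟩) else 0) * v i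
          = ∑ s : {i : κ // α i = 0}, y'' (Sum.inl s) * v s.1 := by
        rw [← sum_dite_subtype (fun i => α i = 0) (fun s => y'' (Sum.inl s) * v s.1)]
        apply Finset.sum_congr rfl
        intro i _
        split
        · rfl
        · simp
      have t2 : ∑ i, (if h : 0 < α i then
            ∑ k : {k : κ // α k < 0}, y'' (Sum.inr (⟨i, h⟩, k)) * (-α k.1) else 0) * v i
          = ∑ p : {p : κ // 0 < α p}, ∑ k : {k : κ // α k < 0},
              y'' (Sum.inr (p, k)) * ((-α k.1) * v p.1) := by
        rw [← sum_dite_subtype (fun i => 0 < α i)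
          (fun p => ∑ k : {k : κ // α k < 0}, y'' (Sum.inr (p, k)) * ((-α k.1) * v p.1))]
        apply Finset.sum_congr rfl
        intro i _
        split
        · rw [Finset.sum_mul]
          apply Finset.sum_congr rfl
          intro k _
          ring
        · simp
      have t3 : ∑ i, (if h : α i < 0 then
            ∑ p : {p : κ // 0 < α p}, y'' (Sum.inr (p, ⟨i, h⟩)) * α p.1 else 0) * v i
          = ∑ p : {p : κ // 0 < α p}, ∑ k : {k : κ // α k < 0},
              y'' (Sum.inr (p, k)) * (α p.1 * v k.1) := by
        rw [Finset.sum_comm]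
        rw [← sum_dite_subtype (fun i => α i < 0)
          (fun k => ∑ p : {p : κ // 0 < α p}, y'' (Sum.inr (p, k)) * (α p.1 * v k.1))]
        apply Finset.sum_congr rfl
        intro i _
        split
        · rw [Finset.sum_mul]
          apply Finset.sum_congr rfl
          intro p _
          ring
        · simp
      simp only [hy, add_mul]
      rw [Finset.sum_add_distrib, Finset.sum_add_distrib, t1, t2, t3,
        Fintype.sum_sum_type, Fintype.sum_prod_type]
      simp only [Sum.elim_inl, Sum.elim_inr, mul_add, Finset.sum_add_distrib]
      rw [add_assoc]
    refine ⟨y, hynn, ?_, ?_⟩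
    · intro j
      induction j using Fin.lastCases with
      | last =>
        rw [master α]
        apply Finset.sum_eq_zero
        rintro (⟨i, h⟩ | ⟨p, q⟩) _
        · simp [h]
        · simp only [Sum.elim_inr]
          ring
      | cast j' =>
        refine Eq.trans ?_ (hy''A j')
        rw [master (fun i => A i j'.castSucc)]
        apply Finset.sum_congr rfl
        rintro (⟨i, h⟩ | ⟨p, q⟩) _ <;> simp [hB, hA']
    · rw [master b]
      have he : ∀ ρ : J, (Sum.elim (fun i => b i.1)
          (fun pq => (-α pq.2.1) * b pq.1.1 + (α pq.1.1) * b pq.2.1) ρ) = c ρ := by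
        rintro (s | pq) <;> simp [hc]
      calc (0:ℚ) < ∑ i : J, y'' i * c i := hy''b
        _ = _ := by
          apply Finset.sum_congr rfl
          intro ρ _
          rw [he ρ]

theorem myFarkas_cone (n : ℕ) {κ : Type*} [Fintype κ] (A : κ → Fin n → ℚ) (w : Fin n → ℚ)
    (H : ∀ u : Fin n → ℚ, (∀ i, 0 ≤ ∑ j, A i j * u j) → 0 ≤ ∑ j, w j * u j) :
    ∃ y : κ → ℚ, (∀ i, 0 ≤ y i) ∧ ∀ j, w j = ∑ i, y i * A i j := by
  classical
  obtain ⟨y, hynn, hyA, hyb⟩ := myFF n (κ := κ ⊕ Unit)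
    (Sum.elim A (fun _ j => -w j)) (Sum.elim (fun _ => 0) (fun _ => 1)) (by
      rintro ⟨x, hx⟩
      have h1 : (1:ℚ) ≤ ∑ j, -w j * x j := by simpa using hx (Sum.inr ())
      have h2 : 0 ≤ ∑ j, w j * x j := H x (fun i => by simpa using hx (Sum.inl i))
      have h3 : ∑ j, -w j * x j = -∑ j, w j * x j := by
        rw [← Finset.sum_neg_distrib]
        apply Finset.sum_congr rfl
        intros; ring
      rw [h3] at h1
      linarith)
  have hy0pos : 0 < y (Sum.inr ()) := by
    have h := hyb
    rw [Fintype.sum_sum_type] at h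
    simp only [Sum.elim_inl, Sum.elim_inr, mul_zero, mul_one, Finset.sum_const_zero,
      Finset.univ_unique, Finset.sum_singleton, zero_add] at h
    exact h
  have hyA' : ∀ j, (∑ i : κ, y (Sum.inl i) * A i j) = y (Sum.inr ()) * w j := by
    intro j
    have h := hyA j
    rw [Fintype.sum_sum_type] at h
    simp only [Sum.elim_inl, Sum.elim_inr, Finset.univ_unique, Finset.sum_singleton] at h
    have hd : (default : Unit) = () := rfl
    rw [hd] at h
    linear_combination h
  refine ⟨fun i => y (Sum.inl i) / y (Sum.inr ()),
    fun i => div_nonneg (hynn _) hy0pos.le, fun j => ?_⟩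
  have hsum : ∑ i : κ, y (Sum.inl i) / y (Sum.inr ()) * A i j
      = (∑ i : κ, y (Sum.inl i) * A i j) / y (Sum.inr ()) := by
    rw [Finset.sum_div]
    apply Finset.sum_congr rfl
    intros; ring
  rw [hsum, hyA' j, mul_div_cancel_left₀ _ hy0pos.ne']

theorem bounded_below {ι κ : Type*} [Fintype ι] [Fintype κ] (A : κ → ι → ℚ) (b : κ → ℚ)
    (w : ι → ℚ)
    (H : ∀ u : ι → ℚ, (∀ i, 0 ≤ ∑ x, A i x * u x) → 0 ≤ ∑ x, w x * u x) :
    ∃ c : ℚ, ∀ x : ι → ℚ, (∀ i, b i ≤ ∑ t, A i t * x t) → c ≤ ∑ t, w t * x t := by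
  classical
  set n := Fintype.card ι with hn
  set e := Fintype.equivFin ι with he
  have key : ∀ (v u : ι → ℚ), ∑ t, v t * u t = ∑ j, v (e.symm j) * u (e.symm j) :=
    fun v u => (Equiv.sum_comp e.symm (fun t => v t * u t)).symm
  have tr : ∀ (v : ι → ℚ) (u' : Fin n → ℚ),
      ∑ t, v t * u' (e t) = ∑ j, v (e.symm j) * u' j := by
    intro v u'
    rw [← Equiv.sum_comp e.symm (fun t => v t * u' (e t))]
    apply Finset.sum_congr rfl
    intro j _
    simp
  obtain ⟨y, hynn, hw⟩ := myFarkas_cone n (fun i j => A i (e.symm j)) (fun j => w (e.symm j)) (by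
    intro u' hu
    have h0 := H (fun t => u' (e t)) (fun i => by rw [tr (A i) u']; exact hu i)
    calc (0:ℚ) ≤ ∑ t, w t * u' (e t) := h0
      _ = _ := tr w u')
  refine ⟨∑ i, y i * b i, fun x hx => ?_⟩
  have e1 : ∑ t, w t * x t = ∑ j, w (e.symm j) * x (e.symm j) := key w x
  have e2 : ∑ j, w (e.symm j) * x (e.symm j) = ∑ i, y i * ∑ t, A i t * x t := by
    calc ∑ j, w (e.symm j) * x (e.symm j)
        = ∑ j, ∑ i, y i * A i (e.symm j) * x (e.symm j) := by
          apply Finset.sum_congr rfl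
          intro j _
          rw [hw j, Finset.sum_mul]
      _ = ∑ i, ∑ j, y i * A i (e.symm j) * x (e.symm j) := Finset.sum_comm
      _ = ∑ i, y i * ∑ j, A i (e.symm j) * x (e.symm j) := by
          apply Finset.sum_congr rfl
          intro i _
          rw [Finset.mul_sum]
          apply Finset.sum_congr rfl
          intros; ring
      _ = ∑ i, y i * ∑ t, A i t * x t := by
          apply Finset.sum_congr rfl
          intro i _
          rw [← key (A i) x]
  have e3 : ∑ i, y i * b i ≤ ∑ i, y i * ∑ t, A i t * x t := by
    apply Finset.sum_le_sum
    intro i _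
    exact mul_le_mul_of_nonneg_left (hx i) (hynn i)
  rw [e1, e2]
  exact e3

end FarkasDev

section AuxGeom

open Finset

variable {ι : Type*}

lemma dotp_add_right [Fintype ι] (w x y : ι → ℚ) :
    dotp w (x + y) = dotp w x + dotp w y := by
  simp only [dotp, Pi.add_apply, mul_add]
  exact Finset.sum_add_distrib

lemma dotp_smul_right [Fintype ι] (w : ι → ℚ) (c : ℚ) (x : ι → ℚ) :
    dotp w (c • x) = c * dotp w x := by
  simp only [dotp, Pi.smul_apply, smul_eq_mul, Finset.mul_sum]
  apply Finset.sum_congr rfl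
  intros; ring

lemma dotp_zero_right [Fintype ι] (w : ι → ℚ) : dotp w (0 : ι → ℚ) = 0 := by
  simp [dotp]

lemma dotp_sum_unit {σ : Type*} [Fintype σ] (W p : (σ ⊕ Unit) → ℚ) :
    dotp W p = dotp (W ∘ Sum.inl) (p ∘ Sum.inl) + W (Sum.inr ()) * p (Sum.inr ()) := by
  simp only [dotp, Fintype.sum_sum_type, Function.comp_apply]
  congr 1
  simp

lemma scale_mem [Fintype ι] {r : ℕ} (A : Fin r → ι → ℚ) (b : Fin r → ℚ) {l : ℚ}
    (hl : 0 < l) {yv : ι → ℚ} (h : ∀ i, l * b i ≤ dotp (A i) yv) :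
    ∀ i, b i ≤ dotp (A i) (l⁻¹ • yv) := by
  intro i
  rw [dotp_smul_right]
  have h2 := mul_le_mul_of_nonneg_left (h i) (inv_nonneg.2 hl.le)
  rwa [← mul_assoc, inv_mul_cancel₀ hl.ne', one_mul] at h2

lemma faceOf_cone_of_dual [Fintype ι] {C : Set (ι → ℚ)} (h0 : (0 : ι → ℚ) ∈ C)
    {W : ι → ℚ} (hdual : ∀ p ∈ C, 0 ≤ dotp W p) :
    faceOf C W = {p | p ∈ C ∧ dotp W p = 0} := by
  ext x
  constructor
  · rintro ⟨hxC, hxmin⟩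
    refine ⟨hxC, le_antisymm ?_ (hdual x hxC)⟩
    have := hxmin 0 h0
    rwa [dotp_zero_right] at this
  · rintro ⟨hxC, hx0⟩
    refine ⟨hxC, fun y hy => ?_⟩
    rw [hx0]
    exact hdual y hy

lemma faceOf_cone_char [Fintype ι] {C : Set (ι → ℚ)} (h0 : (0 : ι → ℚ) ∈ C)
    (hscale : ∀ t : ℚ, 0 ≤ t → ∀ p ∈ C, t • p ∈ C) {W : ι → ℚ}
    (hne : (faceOf C W).Nonempty) :
    (∀ p ∈ C, 0 ≤ dotp W p) ∧ faceOf C W = {p | p ∈ C ∧ dotp W p = 0} := by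
  have hdual : ∀ p ∈ C, 0 ≤ dotp W p := by
    obtain ⟨x, hxC, hxmin⟩ := hne
    intro p hp
    by_contra hneg
    push_neg at hneg
    have hx0 : dotp W x ≤ 0 := by
      have := hxmin 0 h0
      rwa [dotp_zero_right] at this
    set t : ℚ := (dotp W x - 1) / dotp W p with ht
    have htpos : 0 < t := div_pos_iff.2 (Or.inr ⟨by linarith, hneg⟩)
    have hmem : t • p ∈ C := hscale t htpos.le p hp
    have := hxmin _ hmem
    rw [dotp_smul_right, ht, div_mul_cancel₀ _ hneg.ne] at this
    linarith
  exact ⟨hdual, faceOf_cone_of_dual h0 hdual⟩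

lemma recCone_eq [Fintype ι] {r : ℕ} (A : Fin r → ι → ℚ) (b : Fin r → ℚ) (x0 : ι → ℚ)
    (hx0 : ∀ i, b i ≤ dotp (A i) x0) :
    recCone {x : ι → ℚ | ∀ i, b i ≤ dotp (A i) x} = {u | ∀ i, 0 ≤ dotp (A i) u} := by
  ext u
  constructor
  · intro hu i
    by_contra hneg
    push_neg at hneg
    have hk : ∀ k : ℕ, (x0 + (k : ℚ) • u) ∈ {x : ι → ℚ | ∀ i, b i ≤ dotp (A i) x} := by
      intro k
      induction k with
      | zero => simpa using hx0
      | succ k ih =>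
        have h2 := hu _ ih
        have h3 : x0 + (k : ℚ) • u + u = x0 + ((k : ℚ) + 1) • u := by module
        rw [h3] at h2
        convert h2 using 3
        push_cast
        ring
    obtain ⟨k, hkgt⟩ := exists_nat_gt ((dotp (A i) x0 - b i) / (-dotp (A i) u))
    have h1 := hk k i
    rw [dotp_add_right, dotp_smul_right] at h1
    rw [div_lt_iff₀ (by linarith)] at hkgt
    nlinarith
  · intro hu x hx i
    rw [dotp_add_right]
    have h1 := hu i
    have h2 := hx i
    linarith

lemma tildeSet_eq [Fintype ι] {r : ℕ} (A : Fin r → ι → ℚ) (b : Fin r → ℚ) (x0 : ι → ℚ)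
    (hx0 : ∀ i, b i ≤ dotp (A i) x0) :
    tildeSet {x : ι → ℚ | ∀ i, b i ≤ dotp (A i) x} =
      {p : (ι ⊕ Unit) → ℚ | 0 ≤ p (Sum.inr ()) ∧
        ∀ i, p (Sum.inr ()) * b i ≤ dotp (A i) (p ∘ Sum.inl)} := by
  set P : Set (ι → ℚ) := {x | ∀ i, b i ≤ dotp (A i) x} with hPdef
  set pre : Set ((ι ⊕ Unit) → ℚ) :=
    {p | ∃ x ∈ P, ∃ l : ℚ, 0 < l ∧ p = Sum.elim (l • x) (fun _ => l)} with hpre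
  set T : Set ((ι ⊕ Unit) → ℚ) := {p | 0 ≤ p (Sum.inr ()) ∧
    ∀ i, p (Sum.inr ()) * b i ≤ dotp (A i) (p ∘ Sum.inl)} with hTdef
  have hTclosed : IsClosed T := by
    have h1 : T = {p : (ι ⊕ Unit) → ℚ | 0 ≤ p (Sum.inr ())} ∩
        ⋂ i, {p : (ι ⊕ Unit) → ℚ | p (Sum.inr ()) * b i ≤ dotp (A i) (p ∘ Sum.inl)} := by
      ext p
      simp [hTdef, Set.mem_iInter]
    rw [h1]
    apply IsClosed.inter
    · exact isClosed_le continuous_const (continuous_apply _)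
    · apply isClosed_iInter
      intro i
      apply isClosed_le
      · exact (continuous_apply _).mul continuous_const
      · show Continuous fun p : (ι ⊕ Unit) → ℚ => ∑ t, A i t * p (Sum.inl t)
        exact continuous_finset_sum _ fun t _ => continuous_const.mul (continuous_apply _)
  have hsub : pre ⊆ T := by
    rintro p ⟨x, hx, l, hl, rfl⟩
    constructor
    · exact le_of_lt hl
    · intro i
      show l * b i ≤ dotp (A i) ((Sum.elim (l • x) fun _ => l) ∘ Sum.inl)
      have hcomp : ((Sum.elim (l • x) fun _ => l : (ι ⊕ Unit) → ℚ) ∘ Sum.inl) = l • x := rfl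
      rw [hcomp, dotp_smul_right]
      exact mul_le_mul_of_nonneg_left (hx i) hl.le
  apply le_antisymm
  · exact closure_minimal hsub hTclosed
  · intro p hp
    obtain ⟨hl0, hAp⟩ := hp
    rcases hl0.eq_or_lt with hzero | hpos
    · -- height 0 : limit argument
      set yv : ι → ℚ := p ∘ Sum.inl with hyv
      have hy : ∀ i, 0 ≤ dotp (A i) yv := by
        intro i
        have := hAp i
        rw [← hzero, zero_mul] at this
        exact this
      set g : ℚ → ((ι ⊕ Unit) → ℚ) := fun ε => Sum.elim (ε • x0 + yv) (fun _ => ε) with hg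
      have hcont : Continuous g := by
        apply continuous_pi
        rintro (a | u)
        · show Continuous fun ε : ℚ => ε * x0 a + yv a
          exact (continuous_id.mul continuous_const).add continuous_const
        · exact continuous_id
      have hg0 : g 0 = p := by
        funext q'
        rcases q' with a | u
        · show (0 : ℚ) * x0 a + yv a = p (Sum.inl a)
          simp [hyv]
        · rcases u
          exact hzero

      have htend : Filter.Tendsto g (nhdsWithin 0 (Set.Ioi 0)) (nhds p) := by
        have h2 := hcont.tendsto 0
        rw [hg0] at h2
        exact h2.mono_left nhdsWithin_le_nhds
      apply mem_closure_of_tendsto htend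
      filter_upwards [self_mem_nhdsWithin] with ε hε
      have hεpos : 0 < ε := hε
      refine ⟨x0 + ε⁻¹ • yv, ?_, ε, hεpos, ?_⟩
      · intro i
        rw [dotp_add_right, dotp_smul_right]
        have h3 := mul_nonneg (inv_nonneg.2 hεpos.le) (hy i)
        have h4 := hx0 i
        linarith
      · funext q'
        rcases q' with a | u
        · show ε * x0 a + yv a = ε * (x0 a + ε⁻¹ * yv a)
          rw [mul_add, ← mul_assoc, mul_inv_cancel₀ hεpos.ne', one_mul]
        · rfl
    · apply subset_closure
      refine ⟨(p (Sum.inr ()))⁻¹ • (p ∘ Sum.inl), scale_mem A b hpos hAp, p (Sum.inr ()), hpos, ?_⟩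
      funext q'
      rcases q' with a | u
      · show p (Sum.inl a) = p (Sum.inr ()) * ((p (Sum.inr ()))⁻¹ * p (Sum.inl a))
        rw [← mul_assoc, mul_inv_cancel₀ hpos.ne', one_mul]
      · rcases u
        rfl

end AuxGeom

/-- the fan induced by `π̃(P̃)` is the cone over the subdivision of
`Q` induced by `π(P)`: at height 1 its cells slice to the cells of the subdivision
induced by `π(P)`, and at height 0 to the cells induced by the faces of `rec(P)`. -/
theorem induced_fan_is_cone_over_subdivision (m d : ℕ)
    (P : Set ((Fin m ⊕ Fin d) → ℚ)) (hP : IsPolyhedron P) (hne : P.Nonempty) :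
    (∀ q ∈ (fun x : (Fin m ⊕ Fin d) → ℚ => x ∘ Sum.inr) '' P,
        tildeCell m d P (Sum.elim q fun _ => 1) ∩ {z | z (Sum.inr ()) = 1}
          = {z : (Fin d ⊕ Unit) → ℚ |
              z ∘ Sum.inl ∈ baseCell m d P q ∧ z (Sum.inr ()) = 1}) ∧
      ∀ q ∈ (fun x : (Fin m ⊕ Fin d) → ℚ => x ∘ Sum.inr) '' recCone P,
        tildeCell m d P (Sum.elim q fun _ => 0) ∩ {z | z (Sum.inr ()) = 0}
          = {z : (Fin d ⊕ Unit) → ℚ |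
              z ∘ Sum.inl ∈ baseCell m d (recCone P) q ∧ z (Sum.inr ()) = 0} := by
  classical
  obtain ⟨r, A, b, hPeq⟩ := hP
  subst hPeq
  obtain ⟨x0, hx0⟩ := hne
  have hx0' : ∀ i, b i ≤ dotp (A i) x0 := hx0
  set Pset : Set ((Fin m ⊕ Fin d) → ℚ) := {x | ∀ i, b i ≤ dotp (A i) x} with hPsetdef
  have hT := tildeSet_eq A b x0 hx0'
  have hRec := recCone_eq A b x0 hx0'
  -- basic cone facts
  have h0T : (0 : ((Fin m ⊕ Fin d) ⊕ Unit) → ℚ) ∈ tildeSet Pset := by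
    rw [hT]
    refine ⟨le_rfl, fun i => ?_⟩
    show (0:ℚ) * b i ≤ dotp (A i) ((0 : ((Fin m ⊕ Fin d) ⊕ Unit) → ℚ) ∘ Sum.inl)
    have hc : ((0 : ((Fin m ⊕ Fin d) ⊕ Unit) → ℚ) ∘ Sum.inl) = (0 : (Fin m ⊕ Fin d) → ℚ) := rfl
    rw [hc, dotp_zero_right, zero_mul]
  have hscaleT : ∀ t : ℚ, 0 ≤ t → ∀ p ∈ tildeSet Pset, t • p ∈ tildeSet Pset := by
    intro t ht p hp
    rw [hT] at hp ⊢
    obtain ⟨h1, h2⟩ := hp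
    refine ⟨?_, fun i => ?_⟩
    · show 0 ≤ t * p (Sum.inr ())
      exact mul_nonneg ht h1
    · show t * p (Sum.inr ()) * b i ≤ dotp (A i) ((t • p) ∘ Sum.inl)
      have hc : ((t • p) ∘ Sum.inl) = t • (p ∘ Sum.inl) := rfl
      rw [hc, dotp_smul_right]
      calc t * p (Sum.inr ()) * b i = t * (p (Sum.inr ()) * b i) := by ring
        _ ≤ t * dotp (A i) (p ∘ Sum.inl) := mul_le_mul_of_nonneg_left (h2 i) ht
  have h0R : (0 : (Fin m ⊕ Fin d) → ℚ) ∈ recCone Pset := by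
    rw [hRec]
    intro i
    rw [dotp_zero_right]
  have hscaleR : ∀ t : ℚ, 0 ≤ t → ∀ u ∈ recCone Pset, t • u ∈ recCone Pset := by
    intro t ht u hu
    rw [hRec] at hu ⊢
    intro i
    rw [dotp_smul_right]
    exact mul_nonneg ht (hu i)
  -- slice lemmas
  have memT1 : ∀ x, x ∈ Pset → (Sum.elim x (fun _ => (1:ℚ))) ∈ tildeSet Pset := by
    intro x hx
    rw [hT]
    refine ⟨?_, fun i => ?_⟩
    · show (0:ℚ) ≤ 1
      norm_num
    · show (1:ℚ) * b i ≤ dotp (A i) ((Sum.elim x (fun _ => (1:ℚ)) : ((Fin m ⊕ Fin d) ⊕ Unit) → ℚ) ∘ Sum.inl)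
      have hc : ((Sum.elim x (fun _ => (1:ℚ)) : ((Fin m ⊕ Fin d) ⊕ Unit) → ℚ) ∘ Sum.inl) = x := rfl
      rw [hc, one_mul]
      exact hx i
  have memT0 : ∀ u, u ∈ recCone Pset → (Sum.elim u (fun _ => (0:ℚ))) ∈ tildeSet Pset := by
    intro u hu
    rw [hRec] at hu
    rw [hT]
    refine ⟨le_rfl, fun i => ?_⟩
    show (0:ℚ) * b i ≤ dotp (A i) ((Sum.elim u (fun _ => (0:ℚ)) : ((Fin m ⊕ Fin d) ⊕ Unit) → ℚ) ∘ Sum.inl)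
    have hc : ((Sum.elim u (fun _ => (0:ℚ)) : ((Fin m ⊕ Fin d) ⊕ Unit) → ℚ) ∘ Sum.inl) = u := rfl
    rw [hc, zero_mul]
    exact hu i
  have sliceT1 : ∀ p, p ∈ tildeSet Pset → p (Sum.inr ()) = 1 → (p ∘ Sum.inl) ∈ Pset := by
    intro p hp h1
    rw [hT] at hp
    intro i
    have h2 := hp.2 i
    rwa [h1, one_mul] at h2
  have sliceT0 : ∀ p, p ∈ tildeSet Pset → p (Sum.inr ()) = 0 → (p ∘ Sum.inl) ∈ recCone Pset := by
    intro p hp h0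
    rw [hT] at hp
    rw [hRec]
    intro i
    have h2 := hp.2 i
    rwa [h0, zero_mul] at h2
  have hdotW : ∀ (w : (Fin m ⊕ Fin d) → ℚ) (cv : ℚ) (p : ((Fin m ⊕ Fin d) ⊕ Unit) → ℚ),
      dotp (Sum.elim w (fun _ => cv)) p = dotp w (p ∘ Sum.inl) + cv * p (Sum.inr ()) := by
    intro w cv p
    rw [dotp_sum_unit]
    rfl
  have hproj : ∀ (x : (Fin m ⊕ Fin d) → ℚ) (l : ℚ),
      projTilde m d (Sum.elim x (fun _ => l)) = Sum.elim (x ∘ Sum.inr) (fun _ => l) := by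
    intro x l
    funext q'
    rcases q' with i | u
    · rfl
    · rfl
  -- dual certificate for height-1 faces
  have dualW1 : ∀ (w xs : (Fin m ⊕ Fin d) → ℚ), xs ∈ Pset → (∀ y ∈ Pset, dotp w xs ≤ dotp w y) →
      ∀ p ∈ tildeSet Pset, 0 ≤ dotp (Sum.elim w (fun _ => -(dotp w xs))) p := by
    intro w xs hxsP hxsmin p hp
    have hp' := hp
    rw [hT] at hp'
    obtain ⟨hl, hAp⟩ := hp'
    rw [hdotW]
    rcases hl.eq_or_lt with h0 | hpos
    · have hyR : (p ∘ Sum.inl) ∈ recCone Pset := sliceT0 p hp h0.symm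
      rw [hRec] at hyR
      have hmem : (xs + (p ∘ Sum.inl)) ∈ Pset := by
        intro i
        rw [dotp_add_right]
        have := hxsP i
        have := hyR i
        linarith
      have h2 := hxsmin _ hmem
      rw [dotp_add_right] at h2
      rw [← h0]
      ring_nf
      linarith
    · have hmem := scale_mem A b hpos hAp
      have h2 := hxsmin _ hmem
      rw [dotp_smul_right] at h2
      have h3 := mul_le_mul_of_nonneg_left h2 hl
      rw [← mul_assoc, mul_inv_cancel₀ hpos.ne', one_mul] at h3
      nlinarith
  constructor
  · -- height 1
    rintro q ⟨xq, hxqP, hxq⟩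
    ext z
    constructor
    · rintro ⟨hzC, hz1⟩
      refine ⟨?_, hz1⟩
      apply Set.mem_sInter.2
      intro S hS
      obtain ⟨E, ⟨⟨xs, hxsE⟩, w, hwE⟩, rfl, hqS⟩ := hS
      rw [hwE] at hxsE
      obtain ⟨hxsP, hxsmin⟩ := hxsE
      have hWd : ∀ p ∈ tildeSet Pset, 0 ≤ dotp (Sum.elim w (fun _ => -(dotp w xs))) p :=
        dualW1 w xs hxsP hxsmin
      have hface := faceOf_cone_of_dual h0T hWd
      obtain ⟨xq', hxq'E, hπ⟩ := hqS
      have hπ' : xq' ∘ Sum.inr = q := hπ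
      rw [hwE] at hxq'E
      obtain ⟨hxq'P, hxq'min⟩ := hxq'E
      have heqmin : dotp w xq' = dotp w xs := le_antisymm (hxq'min xs hxsP) (hxsmin xq' hxq'P)
      have hp'F : Sum.elim xq' (fun _ => (1:ℚ)) ∈
          faceOf (tildeSet Pset) (Sum.elim w (fun _ => -(dotp w xs))) := by
        rw [hface]
        refine ⟨memT1 xq' hxq'P, ?_⟩
        rw [hdotW]
        show dotp w xq' + -(dotp w xs) * 1 = 0
        rw [heqmin]
        ring
      have hq1 : (Sum.elim q fun _ => (1:ℚ)) ∈
          projTilde m d '' faceOf (tildeSet Pset) (Sum.elim w (fun _ => -(dotp w xs))) := by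
        refine ⟨Sum.elim xq' (fun _ => 1), hp'F, ?_⟩
        rw [hproj, hπ']
      obtain ⟨p, hpF, hpz⟩ := Set.mem_sInter.1 hzC _
        ⟨faceOf (tildeSet Pset) (Sum.elim w (fun _ => -(dotp w xs))),
          ⟨⟨_, hp'F⟩, Sum.elim w (fun _ => -(dotp w xs)), rfl⟩, rfl, hq1⟩
      rw [hface] at hpF
      obtain ⟨hpT, hpzero⟩ := hpF
      have hp1 : p (Sum.inr ()) = 1 := (congrFun hpz (Sum.inr ())).trans hz1
      have hxP : (p ∘ Sum.inl) ∈ Pset := sliceT1 p hpT hp1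
      have hxmin : dotp w (p ∘ Sum.inl) = dotp w xs := by
        rw [hdotW, hp1] at hpzero
        linarith
      have hxE : (p ∘ Sum.inl) ∈ E := by
        rw [hwE]
        exact ⟨hxP, fun y hy => by rw [hxmin]; exact hxsmin y hy⟩
      exact ⟨p ∘ Sum.inl, hxE, by funext i; exact congrFun hpz (Sum.inl i)⟩
    · rintro ⟨hbase, hz1⟩
      refine ⟨?_, hz1⟩
      apply Set.mem_sInter.2
      intro S hS
      obtain ⟨F, ⟨hFne, W, hWF⟩, rfl, hqF⟩ := hS
      subst hWF
      obtain ⟨hWd, hface⟩ := faceOf_cone_char h0T hscaleT hFne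
      obtain ⟨p1, hp1F, hp1z⟩ := hqF
      rw [hface] at hp1F
      obtain ⟨hp1T, hp1zero⟩ := hp1F
      have hp1h : p1 (Sum.inr ()) = 1 := congrFun hp1z (Sum.inr ())
      have hx1P : (p1 ∘ Sum.inl) ∈ Pset := sliceT1 p1 hp1T hp1h
      have hq1 : (p1 ∘ Sum.inl) ∘ Sum.inr = q := by
        funext i
        exact congrFun hp1z (Sum.inl i)
      have hdual1 : ∀ x ∈ Pset, 0 ≤ dotp (W ∘ Sum.inl) x + W (Sum.inr ()) := by
        intro x hx
        have h2 := hWd _ (memT1 x hx)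
        rw [dotp_sum_unit] at h2
        have hc : ((Sum.elim x (fun _ => (1:ℚ)) : ((Fin m ⊕ Fin d) ⊕ Unit) → ℚ) ∘ Sum.inl) = x := rfl
        rw [hc] at h2
        have hc2 : (Sum.elim x (fun _ => (1:ℚ)) : ((Fin m ⊕ Fin d) ⊕ Unit) → ℚ) (Sum.inr ()) = 1 := rfl
        rw [hc2, mul_one] at h2
        exact h2
      have hc1 : dotp (W ∘ Sum.inl) (p1 ∘ Sum.inl) + W (Sum.inr ()) = 0 := by
        rw [dotp_sum_unit, hp1h, mul_one] at hp1zero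
        exact hp1zero
      have hmin : ∀ x ∈ Pset, dotp (W ∘ Sum.inl) (p1 ∘ Sum.inl) ≤ dotp (W ∘ Sum.inl) x := by
        intro x hx
        have := hdual1 x hx
        linarith
      have hqE : q ∈ (fun x : (Fin m ⊕ Fin d) → ℚ => x ∘ Sum.inr) '' faceOf Pset (W ∘ Sum.inl) :=
        ⟨p1 ∘ Sum.inl, ⟨hx1P, hmin⟩, hq1⟩
      obtain ⟨x, hxE, hxz⟩ := Set.mem_sInter.1 hbase _
        ⟨faceOf Pset (W ∘ Sum.inl), ⟨⟨_, ⟨hx1P, hmin⟩⟩, W ∘ Sum.inl, rfl⟩, rfl, hqE⟩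
      obtain ⟨hxP, hxmin⟩ := hxE
      have heq : dotp (W ∘ Sum.inl) x = dotp (W ∘ Sum.inl) (p1 ∘ Sum.inl) :=
        le_antisymm (hxmin _ hx1P) (hmin x hxP)
      refine ⟨Sum.elim x (fun _ => 1), ?_, ?_⟩
      · rw [hface]
        refine ⟨memT1 x hxP, ?_⟩
        rw [dotp_sum_unit]
        show dotp (W ∘ Sum.inl) x + W (Sum.inr ()) * 1 = 0
        rw [mul_one, heq]
        exact hc1
      · funext q'
        rcases q' with i | u
        · show x (Sum.inr i) = z (Sum.inl i)
          exact congrFun hxz i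
        · rcases u
          show (1:ℚ) = z (Sum.inr ())
          exact hz1.symm
  · -- height 0
    rintro q ⟨uq, huqR, huq⟩
    ext z
    constructor
    · rintro ⟨hzC, hz0⟩
      refine ⟨?_, hz0⟩
      apply Set.mem_sInter.2
      intro S hS
      obtain ⟨E, ⟨hEne, w, hwE⟩, rfl, hqS⟩ := hS
      subst hwE
      obtain ⟨hwdR, hfaceR⟩ := faceOf_cone_char h0R hscaleR hEne
      have hH : ∀ u : (Fin m ⊕ Fin d) → ℚ,
          (∀ i, 0 ≤ ∑ t, A i t * u t) → 0 ≤ ∑ t, w t * u t := by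
        intro u hu
        have huR : u ∈ recCone Pset := by
          rw [hRec]
          exact hu
        exact hwdR u huR
      obtain ⟨c, hc⟩ := bounded_below A b w hH
      have hWd : ∀ p ∈ tildeSet Pset, 0 ≤ dotp (Sum.elim w (fun _ => -c)) p := by
        intro p hp
        have hp' := hp
        rw [hT] at hp'
        obtain ⟨hl, hAp⟩ := hp'
        rw [hdotW]
        rcases hl.eq_or_lt with h0 | hpos
        · have hyR : (p ∘ Sum.inl) ∈ recCone Pset := sliceT0 p hp h0.symm
          have h2 := hwdR _ hyR
          rw [← h0]
          ring_nf
          linarith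
        · have h2 := hc _ (scale_mem A b hpos hAp)
          have h3 : c ≤ (p (Sum.inr ()))⁻¹ * dotp w (p ∘ Sum.inl) := by
            rw [← dotp_smul_right]
            exact h2
          have h4 := mul_le_mul_of_nonneg_left h3 hl
          rw [← mul_assoc, mul_inv_cancel₀ hpos.ne', one_mul] at h4
          nlinarith
      have hfaceT := faceOf_cone_of_dual h0T hWd
      obtain ⟨u0, hu0E, hπ0⟩ := hqS
      have hπ0' : u0 ∘ Sum.inr = q := hπ0
      rw [hfaceR] at hu0E
      obtain ⟨hu0R, hu0zero⟩ := hu0E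
      have hp0F : Sum.elim u0 (fun _ => (0:ℚ)) ∈
          faceOf (tildeSet Pset) (Sum.elim w (fun _ => -c)) := by
        rw [hfaceT]
        refine ⟨memT0 u0 hu0R, ?_⟩
        rw [hdotW]
        show dotp w u0 + -c * 0 = 0
        rw [hu0zero]
        ring
      have hq0 : (Sum.elim q fun _ => (0:ℚ)) ∈
          projTilde m d '' faceOf (tildeSet Pset) (Sum.elim w (fun _ => -c)) := by
        refine ⟨Sum.elim u0 (fun _ => 0), hp0F, ?_⟩
        rw [hproj, hπ0']
      obtain ⟨p, hpF, hpz⟩ := Set.mem_sInter.1 hzC _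
        ⟨faceOf (tildeSet Pset) (Sum.elim w (fun _ => -c)),
          ⟨⟨_, hp0F⟩, Sum.elim w (fun _ => -c), rfl⟩, rfl, hq0⟩
      rw [hfaceT] at hpF
      obtain ⟨hpT, hpzero⟩ := hpF
      have hp0 : p (Sum.inr ()) = 0 := (congrFun hpz (Sum.inr ())).trans hz0
      have hpR : (p ∘ Sum.inl) ∈ recCone Pset := sliceT0 p hpT hp0
      have hpzero' : dotp w (p ∘ Sum.inl) = 0 := by
        rw [hdotW, hp0] at hpzero
        linarith
      have hpE : (p ∘ Sum.inl) ∈ faceOf (recCone Pset) w := by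
        rw [hfaceR]
        exact ⟨hpR, hpzero'⟩
      exact ⟨p ∘ Sum.inl, hpE, by funext i; exact congrFun hpz (Sum.inl i)⟩
    · rintro ⟨hbase, hz0⟩
      refine ⟨?_, hz0⟩
      apply Set.mem_sInter.2
      intro S hS
      obtain ⟨F, ⟨hFne, W, hWF⟩, rfl, hqF⟩ := hS
      subst hWF
      obtain ⟨hWd, hface⟩ := faceOf_cone_char h0T hscaleT hFne
      obtain ⟨p1, hp1F, hp1z⟩ := hqF
      rw [hface] at hp1F
      obtain ⟨hp1T, hp1zero⟩ := hp1F
      have hp1h : p1 (Sum.inr ()) = 0 := congrFun hp1z (Sum.inr ())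
      have hu1R : (p1 ∘ Sum.inl) ∈ recCone Pset := sliceT0 p1 hp1T hp1h
      have hq1 : (p1 ∘ Sum.inl) ∘ Sum.inr = q := by
        funext i
        exact congrFun hp1z (Sum.inl i)
      have hwdR : ∀ u ∈ recCone Pset, 0 ≤ dotp (W ∘ Sum.inl) u := by
        intro u hu
        have h2 := hWd _ (memT0 u hu)
        rw [dotp_sum_unit] at h2
        have hc : ((Sum.elim u (fun _ => (0:ℚ)) : ((Fin m ⊕ Fin d) ⊕ Unit) → ℚ) ∘ Sum.inl) = u := rfl
        have hc2 : (Sum.elim u (fun _ => (0:ℚ)) : ((Fin m ⊕ Fin d) ⊕ Unit) → ℚ) (Sum.inr ()) = 0 := rfl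
        rw [hc, hc2, mul_zero, add_zero] at h2
        exact h2
      have hu1zero : dotp (W ∘ Sum.inl) (p1 ∘ Sum.inl) = 0 := by
        rw [dotp_sum_unit, hp1h, mul_zero, add_zero] at hp1zero
        exact hp1zero
      have hfaceR := faceOf_cone_of_dual h0R hwdR
      have hE : (p1 ∘ Sum.inl) ∈ faceOf (recCone Pset) (W ∘ Sum.inl) := by
        rw [hfaceR]
        exact ⟨hu1R, hu1zero⟩
      have hqE : q ∈ (fun x : (Fin m ⊕ Fin d) → ℚ => x ∘ Sum.inr) ''
          faceOf (recCone Pset) (W ∘ Sum.inl) := ⟨p1 ∘ Sum.inl, hE, hq1⟩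
      obtain ⟨u, huE, huz⟩ := Set.mem_sInter.1 hbase _
        ⟨faceOf (recCone Pset) (W ∘ Sum.inl), ⟨⟨_, hE⟩, W ∘ Sum.inl, rfl⟩, rfl, hqE⟩
      have huE' := huE
      rw [hfaceR] at huE'
      obtain ⟨huR, huzero⟩ := huE'
      refine ⟨Sum.elim u (fun _ => 0), ?_, ?_⟩
      · rw [hface]
        refine ⟨memT0 u huR, ?_⟩
        rw [dotp_sum_unit]
        show dotp (W ∘ Sum.inl) u + W (Sum.inr ()) * (0:ℚ) = 0
        rw [huzero, mul_zero, add_zero]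
      · funext q'
        rcases q' with i | u'
        · show u (Sum.inr i) = z (Sum.inl i)
          exact congrFun huz i
        · rcases u'
          show (0:ℚ) = z (Sum.inr ())
          exact hz0.symm
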